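/- In the category of presheaves Set^{A^op} on a small category A, every morphism is a retract of an X-cellular morphism for a suitable set X of morphisms; consequently (Mor(Set^{A^op}), Iso) is a cofibrantly generated weak factorization system. -/

import Mathlib

open CategoryTheory CategoryTheory.Limits

universe w v u

namespace Paper

variable {K : Type u} [Category.{v} K]

/-- The class of morphisms with the right lifting property w.r.t. every member of `L`. -/
def rlp (L : MorphismProperty K) : MorphismProperty K :=
  fun _ _ g => ∀ ⦃A B : K⦄ (f : A ⟶ B), L f → HasLiftingProperty f g

/-- The class of morphisms with the left lifting property w.r.t. every member of `R`. -/
def llp (R : MorphismProperty K) : MorphismProperty K :=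
  fun _ _ f => ∀ ⦃X Y : K⦄ (g : X ⟶ Y), R g → HasLiftingProperty f g

/-- `f` is a retract of `f'` in the arrow category. -/
def IsRetractArrow {A B X Y : K} (f : A ⟶ B) (f' : X ⟶ Y) : Prop :=
  ∃ (i : Arrow.mk f ⟶ Arrow.mk f') (r : Arrow.mk f' ⟶ Arrow.mk f), i ≫ r = 𝟙 (Arrow.mk f)

/-- The inclusion functor of the initial segment below `j`. -/
def below {J : Type w} [Preorder J] (j : J) : Set.Iio j ⥤ J :=
  Monotone.functor (f := (Subtype.val : Set.Iio j → J)) (fun _ _ h => h)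

/-- The canonical cocone of the restriction of a chain `F` below `j`, with point `F.obj j`. -/
def restrictionCocone {J : Type w} [Preorder J] (F : J ⥤ K) (j : J) :
    Cocone (below j ⋙ F) where
  pt := F.obj j
  ι :=
    { app := fun i => F.map (homOfLE i.2.le)
      naturality := by
        intro i i' g
        dsimp [below]
        rw [← F.map_comp, Category.comp_id]
        rfl }

/-- A chain is smooth (continuous) if at every limit ordinal stage it is the colimit of the
preceding stages. -/
def IsSmooth {J : Type w} [Preorder J] (F : J ⥤ K) : Prop :=
  ∀ j : J, Order.IsSuccLimit j → Nonempty (IsColimit (restrictionCocone F j))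

/-- `f` is a transfinite composition of morphisms belonging to `S`. -/
def IsTransfiniteCompositionOf (S : MorphismProperty K) {X Y : K} (f : X ⟶ Y) : Prop :=
  ∃ (J : Type v) (_ : LinearOrder J) (_ : OrderBot J) (_ : SuccOrder J)
    (_ : WellFoundedLT J) (F : J ⥤ K) (c : Cocone F) (_ : IsColimit c)
    (hX : F.obj ⊥ = X) (hY : c.pt = Y),
    IsSmooth F ∧ (∀ j : J, ¬IsMax j → S (F.map (homOfLE (Order.le_succ j)))) ∧
      f = eqToHom hX.symm ≫ c.ι.app ⊥ ≫ eqToHom hY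

/-- The pushouts (cobase changes) of morphisms belonging to `S`. -/
def pushouts (S : MorphismProperty K) : MorphismProperty K :=
  fun _C _P f' => ∃ (A B : K) (f : A ⟶ B) (g : A ⟶ _C) (g' : B ⟶ _P),
    S f ∧ IsPushout f g g' f'

/-- `X`-cellular morphisms: transfinite compositions of pushouts of morphisms from `X`. -/
def IsCellular (X : MorphismProperty K) {A B : K} (f : A ⟶ B) : Prop :=
  IsTransfiniteCompositionOf (pushouts X) f

/-- A class of morphisms is cofibrantly closed if it is closed under transfinite
compositions, pushouts and retracts in the arrow category. -/
structure CofibrantlyClosed (S : MorphismProperty K) : Prop where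
  retract : ∀ {A B X Y : K} (f : A ⟶ B) (f' : X ⟶ Y), IsRetractArrow f f' → S f' → S f
  pushout : ∀ {A B C P : K} (f : A ⟶ B) (g : A ⟶ C) (g' : B ⟶ P) (f' : C ⟶ P),
    IsPushout f g g' f' → S f → S f'
  transfinite : ∀ {A B : K} (f : A ⟶ B), IsTransfiniteCompositionOf S f → S f

/-- The smallest cofibrantly closed class containing `X`. -/
def cofibrantClosure (X : MorphismProperty K) : MorphismProperty K :=
  fun _ _ f => ∀ S : MorphismProperty K, CofibrantlyClosed S → X ≤ S → S f

/-- The strict image of a class of morphisms under a functor. -/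
def strictImage {L : Type*} [Category L] (F : L ⥤ K) (X : MorphismProperty L) :
    MorphismProperty K :=
  fun A B h => ∃ (A' B' : L) (x : A' ⟶ B'), X x ∧ A = F.obj A' ∧ B = F.obj B' ∧ HEq h (F.map x)

/-- `(L, R)` is a weak factorization system. -/
structure IsWFS (L R : MorphismProperty K) : Prop where
  rlp_eq : R = rlp L
  llp_eq : L = llp R
  fact : ∀ {A B : K} (h : A ⟶ B), ∃ (C : K) (f : A ⟶ C) (g : C ⟶ B), L f ∧ R g ∧ f ≫ g = h



/-!
Freely attach to `P` one cell `yoneda a` for every element of `Q(a)`, and then identify, one pair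
at a time, any two sections of the result with the same image in `Q`. Attaching a cell is a
pushout of `⊥ ⟶ yoneda a` and identifying two sections over `a` is a pushout of the codiagonal
of `yoneda a`; at a limit stage every section and every identification already lives at an
earlier stage, so the chain is smooth; and once everything has been attached and identified the
result is `Q`. Thus `g : P ⟶ Q` is, up to an isomorphism of its source, cellular for these
generators, and a class closed under pushouts, transfinite compositions and retracts that
contains them contains every morphism.
-/

lemma isWFS_top_isomorphisms :
    IsWFS (⊤ : MorphismProperty K) (MorphismProperty.isomorphisms K) where
  rlp_eq := by
    ext X Y g
    refine ⟨fun (_ : IsIso g) _ _ f _ => inferInstance, fun hg => ?_⟩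
    obtain ⟨⟨⟨l, hl₁, hl₂⟩⟩⟩ :=
      (hg g trivial).sq_hasLift (CommSq.mk (by simp) : CommSq (𝟙 X) g g (𝟙 Y))
    exact ⟨l, hl₁, hl₂⟩
  llp_eq := by
    ext A B f
    exact ⟨fun _ _ _ g (_ : IsIso g) => inferInstance, fun _ => trivial⟩
  fact h := ⟨_, h, 𝟙 _, trivial, MorphismProperty.isomorphisms.infer_property _, by simp⟩

lemma IsTransfiniteCompositionOf.mono {S S' : MorphismProperty K} (hSS' : S ≤ S') {X Y : K}
    {f : X ⟶ Y} (hf : IsTransfiniteCompositionOf S f) : IsTransfiniteCompositionOf S' f := by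
  obtain ⟨J, i₁, i₂, i₃, i₄, F, c, hc, hX, hY, hF, hS, rfl⟩ := hf
  exact ⟨J, i₁, i₂, i₃, i₄, F, c, hc, hX, hY, hF, fun j hj => hSS' _ (hS j hj), rfl⟩

lemma CofibrantlyClosed.of_isCellular {S X : MorphismProperty K} (hS : CofibrantlyClosed S)
    (hXS : X ≤ S) {A B : K} {f : A ⟶ B} (hf : IsCellular X f) : S f := by
  refine hS.transfinite f (hf.mono ?_)
  rintro _ _ _ ⟨_, _, x, g, g', hx, hpush⟩
  exact hS.pushout x g g' _ hpush (hXS _ hx)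

lemma cofibrantClosure_eq_top_of_forall_isRetractArrow {X : MorphismProperty K}
    (h : ∀ {A B : K} (f : A ⟶ B), ∃ (A' B' : K) (f' : A' ⟶ B'),
      IsCellular X f' ∧ IsRetractArrow f f') :
    cofibrantClosure X = ⊤ := by
  ext A B f
  refine ⟨fun _ => trivial, fun _ S hS hXS => ?_⟩
  obtain ⟨_, _, f', hf', hff'⟩ := h f
  exact hS.retract f f' hff' (hS.of_isCellular hXS hf')

lemma isRetractArrow_of_iso_left {A A' B : K} {f : A ⟶ B} {f' : A' ⟶ B} (e : A ≅ A')
    (h : e.hom ≫ f' = f) : IsRetractArrow f f' :=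
  ⟨Arrow.homMk e.hom (𝟙 B), Arrow.homMk e.inv (𝟙 B) (by simp [← h]), by ext <;> simp⟩

section FunctorToTypes

variable {C : Type u} [Category.{v} C]

def fold (F : C ⥤ Type w) : FunctorToTypes.coprod F F ⟶ F :=
  FunctorToTypes.coprod.desc (𝟙 F) (𝟙 F)

lemma Types.isPushout_sumElim {L X Y : Type w} (a b : L → X) (π : X → Y) (hab : π ∘ a = π ∘ b)
    (hπ : Function.Surjective π)
    (hker : ∀ x x', π x = π x' →
      Quot.mk (fun y y' => ∃ l, a l = y ∧ b l = y') x = Quot.mk _ x') :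
    IsPushout (↾(Sum.elim id id) : L ⊕ L ⟶ L) (↾(Sum.elim a b)) (↾(π ∘ a)) (↾π) := by
  have sq : CommSq (↾(Sum.elim id id) : L ⊕ L ⟶ L) (↾(Sum.elim a b)) (↾(π ∘ a)) (↾π) :=
    ⟨by ext (l | l); exacts [rfl, congrFun hab l]⟩
  have hs (s : PushoutCocone (↾(Sum.elim id id) : L ⊕ L ⟶ L) (↾(Sum.elim a b))) {x x' : X}
      (h : π x = π x') : s.inr x = s.inr x' :=
    congrArg (Quot.lift s.inr (by
      rintro _ _ ⟨l, rfl, rfl⟩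
      exact (ConcreteCategory.congr_hom s.condition (.inl l)).symm.trans
        (ConcreteCategory.congr_hom s.condition (.inr l)))) (hker x x' h)
  refine IsPushout.of_isColimit' sq (PushoutCocone.IsColimit.mk _
    (fun s => ↾(s.inr ∘ Function.surjInv hπ)) (fun s => ?_) (fun s => ?_) (fun s m _ hm => ?_))
  · ext l
    exact (hs s (Function.surjInv_eq hπ _)).trans
      (ConcreteCategory.congr_hom s.condition (.inl l)).symm
  · ext x
    exact hs s (Function.surjInv_eq hπ _)
  · ext y
    obtain ⟨x, rfl⟩ := hπ y
    exact (ConcreteCategory.congr_hom hm x).trans (hs s (Function.surjInv_eq hπ _).symm)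

lemma isPushout_fold {F X Y : C ⥤ Type w} (a b : F ⟶ X) (π : X ⟶ Y) (hab : a ≫ π = b ≫ π)
    (hπ : ∀ c, Function.Surjective (π.app c))
    (hker : ∀ c x x', π.app c x = π.app c x' →
      Quot.mk (fun y y' => ∃ l, a.app c l = y ∧ b.app c l = y') x = Quot.mk _ x') :
    IsPushout (fold F) (FunctorToTypes.coprod.desc a b) (a ≫ π) π :=
  IsPushout.of_forall_isPushout_app fun c =>
    Types.isPushout_sumElim (a.app c) (b.app c) (π.app c)
      (funext (ConcreteCategory.congr_hom (NatTrans.congr_app hab c))) (hπ c) (hker c)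

lemma isIso_of_bijective_app {F G : C ⥤ Type w} (τ : F ⟶ G)
    (h : ∀ c, Function.Bijective (τ.app c)) : IsIso τ :=
  have (c : C) : IsIso (τ.app c) := (isIso_iff_bijective _).2 (h c)
  NatIso.isIso_of_isIso_app τ

lemma isPushout_initial_of_bijective {F X Y : C ⥤ Type w}
    (i : F ⟶ Y) (j : X ⟶ Y) (h : ∀ c, Function.Bijective (Sum.elim (i.app c) (j.app c))) :
    IsPushout (initial.to F) (initial.to X) i j := by
  have := isIso_of_bijective_app (FunctorToTypes.coprod.desc i j) h
  exact IsPushout.of_is_coproduct' (IsColimit.ofIsoColimit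
    (FunctorToTypes.binaryCoproductColimit F X)
    (BinaryCofan.ext (asIso (FunctorToTypes.coprod.desc i j) : FunctorToTypes.coprod F X ≅ Y)
      rfl rfl)) initialIsInitial

end FunctorToTypes

section Generators

variable (A : Type u) [SmallCategory A]

noncomputable def generators : A ⊕ A → Arrow (Aᵒᵖ ⥤ Type u)
  | .inl a => Arrow.mk (initial.to (yoneda.obj a))
  | .inr a => Arrow.mk (fold (yoneda.obj a))

def generatingMorphisms : MorphismProperty (Aᵒᵖ ⥤ Type u) :=
  fun _ _ x => ∃ i, Arrow.mk x = generators A i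

end Generators

/-- Cells `α` are enumerated before relations `β`, and every stage of `J` but the top one
attaches exactly one of them. -/
structure IsCellOrdering {α β J : Type*} [LinearOrder J] [OrderTop J] (pos : α ⊕ β → J) :
    Prop where
  injective : Function.Injective pos
  inl_lt_inr (a : α) (b : β) : pos (.inl a) < pos (.inr b)
  lt_top (c : α ⊕ β) : pos c < ⊤
  exists_eq (j : J) : ¬IsMax j → ∃ c, pos c = j

lemma exists_isCellOrdering (α β : Type u) :
    ∃ (J : Type u) (_ : LinearOrder J) (_ : OrderBot J) (_ : OrderTop J) (_ : SuccOrder J)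
      (_ : WellFoundedLT J) (pos : α ⊕ β → J), IsCellOrdering pos := by
  let : LinearOrder (α ⊕ β) := IsWellOrder.linearOrder (Sum.Lex WellOrderingRel WellOrderingRel)
  have : WellFoundedLT (α ⊕ β) := ⟨IsWellFounded.wf (r := Sum.Lex WellOrderingRel WellOrderingRel)⟩
  let := WellFoundedLT.toOrderBot (WithTop (α ⊕ β))
  refine ⟨WithTop (α ⊕ β), inferInstance, inferInstance, inferInstance,
    SuccOrder.ofLinearWellFoundedLT _, inferInstance, WithTop.some, ⟨WithTop.coe_injective,
    fun a b => WithTop.coe_lt_coe.2 (Sum.Lex.sep a b), WithTop.coe_lt_top, fun j hj => ?_⟩⟩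
  exact WithTop.ne_top_iff_exists.1 (fun h => hj (h ▸ isMax_top))

namespace CellularModel

open Opposite

variable {A : Type u} [SmallCategory A]

def cells (Q : Aᵒᵖ ⥤ Type u) : Aᵒᵖ ⥤ Type u where
  obj b := Σ x : Q.Elements, (unop b ⟶ unop x.1)
  map f := ↾fun (c : Σ x : Q.Elements, (unop _ ⟶ unop x.1)) => ⟨c.1, f.unop ≫ c.2⟩

def cellsEval (Q : Aᵒᵖ ⥤ Type u) : cells Q ⟶ Q where
  app b := ↾fun (c : Σ x : Q.Elements, (unop b ⟶ unop x.1)) => Q.map c.2.op c.1.2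
  naturality b b' f := by
    ext c
    exact Functor.map_comp_apply Q c.2.op f c.1.2

variable {P Q : Aᵒᵖ ⥤ Type u} (g : P ⟶ Q)

/-- `P ⨿ ∐ₓ yoneda x`, over the elements `x` of `Q`. -/
abbrev free (P Q : Aᵒᵖ ⥤ Type u) : Aᵒᵖ ⥤ Type u := FunctorToTypes.coprod P (cells Q)

def eval : free P Q ⟶ Q := FunctorToTypes.coprod.desc g (cellsEval Q)

structure Identification where
  obj : Aᵒᵖ
  fst : (free P Q).obj obj
  snd : (free P Q).obj obj
  eval_eq : (eval g).app obj fst = (eval g).app obj snd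

variable {g} {J : Type u} [LinearOrder J] (pos : Q.Elements ⊕ Identification g → J)

/-- A section of `free P Q` is born at stage `j` once its cell has been attached. -/
def IsBorn (j : J) {b : Aᵒᵖ} : (free P Q).obj b → Prop
  | .inl _ => True
  | .inr c => pos (.inl c.1) < j

abbrev Born (j : J) (b : Aᵒᵖ) : Type u := {m : (free P Q).obj b // IsBorn pos j m}

variable {pos}

lemma IsBorn.map {j : J} {b b' : Aᵒᵖ} (f : b ⟶ b') {m : (free P Q).obj b}
    (hm : IsBorn pos j m) : IsBorn pos j ((free P Q).map f m) := by
  cases m with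
  | inl => trivial
  | inr => exact hm

lemma IsBorn.mono {j j' : J} (hjj' : j ≤ j') {b : Aᵒᵖ} {m : (free P Q).obj b}
    (hm : IsBorn pos j m) : IsBorn pos j' m := by
  cases m with
  | inl => trivial
  | inr => exact lt_of_lt_of_le hm hjj'

variable (pos)

def StageRel (j : J) (b : Aᵒᵖ) (m m' : Born pos j b) : Prop :=
  ∃ (r : Identification g) (h : r.obj ⟶ b), pos (.inr r) < j ∧
    m.1 = (free P Q).map h r.fst ∧ m'.1 = (free P Q).map h r.snd

variable {pos} in
lemma mk_injective_of_forall_not_lt {j : J} (hj : ∀ r, ¬pos (.inr r) < j) (b : Aᵒᵖ) :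
    Function.Injective (Quot.mk (StageRel pos j b)) := fun _ _ h =>
  Relation.EqvGen.eqvGen_le (fun _ _ ⟨r, _, hr, _⟩ => (hj r hr).elim) _ _ (Quot.eqvGen_exact h)

def stage (j : J) : Aᵒᵖ ⥤ Type u where
  obj b := Quot (StageRel pos j b)
  map f := ↾Quot.map (fun m => ⟨(free P Q).map f m.1, m.2.map f⟩) (by
    rintro _ _ ⟨r, h, hr, h₁, h₂⟩
    refine ⟨r, h ≫ f, hr, ?_, ?_⟩ <;> dsimp only <;> simp only [h₁, h₂, Functor.map_comp_apply])
  map_id b := by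
    ext ⟨m⟩
    exact congrArg (Quot.mk _) (Subtype.ext (Functor.map_id_apply _ _ _))
  map_comp f f' := by
    ext ⟨m⟩
    exact congrArg (Quot.mk _) (Subtype.ext (Functor.map_comp_apply _ _ _ _))

variable {pos} in
def stageMap {j j' : J} (hjj' : j ≤ j') : stage pos j ⟶ stage pos j' where
  app b := ↾Quot.map (fun m => ⟨m.1, m.2.mono hjj'⟩) (by
    rintro _ _ ⟨r, h, hr, h₁, h₂⟩
    exact ⟨r, h, hr.trans_le hjj', h₁, h₂⟩)
  naturality _ _ _ := by
    ext ⟨m⟩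
    rfl

def chain : J ⥤ (Aᵒᵖ ⥤ Type u) where
  obj := stage pos
  map f := stageMap (leOfHom f)
  map_id _ := by
    ext _ ⟨m⟩
    rfl
  map_comp _ _ := by
    ext _ ⟨m⟩
    rfl

def stageEval (j : J) : stage pos j ⟶ Q where
  app b := ↾Quot.lift (fun m => (eval g).app b m.1) (by
    rintro _ _ ⟨r, h, -, h₁, h₂⟩
    simp only [h₁, h₂, NatTrans.naturality_apply, r.eval_eq])
  naturality b b' f := by
    ext ⟨m⟩
    exact NatTrans.naturality_apply (eval g) f m.1

def cocone : Cocone (chain pos) where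
  pt := Q
  ι :=
    { app := stageEval pos
      naturality _ _ _ := by
        ext _ ⟨m⟩
        rfl }

variable {pos}

section Bot

variable [OrderBot J]

variable (pos) in
def toStageBot : P ⟶ stage pos ⊥ where
  app b := ↾fun p => Quot.mk _ ⟨.inl p, trivial⟩

lemma bijective_toStageBot (b : Aᵒᵖ) : Function.Bijective ((toStageBot pos).app b) := by
  have hinj := mk_injective_of_forall_not_lt (fun r => not_lt_bot (a := pos (.inr r))) b
  refine ⟨fun p p' h => Sum.inl_injective (congrArg Subtype.val (hinj h)), ?_⟩
  rintro ⟨⟨p | c, hm⟩⟩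
  · exact ⟨p, rfl⟩
  · exact (not_lt_bot hm).elim

lemma toStageBot_comp_stageEval : toStageBot pos ≫ stageEval pos ⊥ = g := rfl

end Bot

lemma exists_isBorn_lt [SuccOrder J] {j : J} (hj : Order.IsSuccLimit j) {b : Aᵒᵖ}
    {m : (free P Q).obj b} (hm : IsBorn pos j m) : ∃ k < j, IsBorn pos k m := by
  cases m with
  | inl => exact (not_isMin_iff.1 hj.not_isMin).imp fun _ hk => ⟨hk, trivial⟩
  | inr c => exact ⟨_, hj.succ_lt hm, Order.lt_succ_of_not_isMax hm.not_isMax⟩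

variable (pos) in
def IdentifiedBefore (j : J) (b : Aᵒᵖ) (m m' : Born pos j b) : Prop :=
  ∃ k < j, ∃ (hm : IsBorn pos k m.1) (hm' : IsBorn pos k m'.1),
    Quot.mk (StageRel pos k b) ⟨m.1, hm⟩ = Quot.mk _ ⟨m'.1, hm'⟩

lemma equivalence_identifiedBefore [SuccOrder J] {j : J} (hj : Order.IsSuccLimit j) (b : Aᵒᵖ) :
    Equivalence (IdentifiedBefore pos j b) where
  refl m :=
    have ⟨k, hk, hm⟩ := exists_isBorn_lt hj m.2
    ⟨k, hk, hm, hm, rfl⟩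
  symm := fun ⟨k, hk, hm, hm', e⟩ => ⟨k, hk, hm', hm, e.symm⟩
  trans := fun ⟨k, hk, hm, _, e⟩ ⟨k', hk', _, hm', e'⟩ =>
    ⟨max k k', max_lt hk hk', hm.mono (le_max_left _ _), hm'.mono (le_max_right _ _),
      (congrArg ((stageMap (le_max_left k k')).app b) e).trans
        (congrArg ((stageMap (le_max_right k k')).app b) e')⟩

variable [OrderTop J]

lemma isBorn_of_inr_le (hpos : IsCellOrdering pos) {r : Identification g} {j : J}
    (hj : pos (.inr r) ≤ j) {b : Aᵒᵖ} (m : (free P Q).obj b) : IsBorn pos j m := by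
  cases m with
  | inl => trivial
  | inr c => exact (hpos.inl_lt_inr c.1 r).trans_le hj

lemma bijective_stageEval_top (hpos : IsCellOrdering pos) (b : Aᵒᵖ) :
    Function.Bijective ((stageEval pos ⊤).app b) := by
  constructor
  · rintro ⟨m⟩ ⟨m'⟩ h
    exact Quot.sound ⟨⟨b, m.1, m'.1, h⟩, 𝟙 b, hpos.lt_top _,
      ((free P Q).map_id_apply _ _).symm, ((free P Q).map_id_apply _ _).symm⟩
  · intro q
    exact ⟨Quot.mk _ ⟨.inr ⟨⟨b, q⟩, 𝟙 _⟩, hpos.lt_top _⟩, Functor.map_id_apply Q b q⟩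

noncomputable def isColimitCocone (hpos : IsCellOrdering pos) : IsColimit (cocone pos) := by
  have := isIso_of_bijective_app _ (bijective_stageEval_top hpos)
  exact IsColimit.ofIsoColimit (colimitOfDiagramTerminal isTerminalTop (chain pos))
    (Cocone.ext (asIso (stageEval pos ⊤) : stage pos ⊤ ≅ Q) fun _ => by ext _ ⟨m⟩; rfl)

section Succ

variable [SuccOrder J]

lemma not_inr_lt_succ_inl (hpos : IsCellOrdering pos) (t : Q.Elements) (r : Identification g) :
    ¬pos (.inr r) < Order.succ (pos (.inl t)) := fun h =>
  (Order.le_of_lt_succ h).not_gt (hpos.inl_lt_inr t r)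

def cellIncl (t : Q.Elements) {j : J} (hj : pos (.inl t) < j) :
    yoneda.obj (unop t.1) ⟶ stage pos j where
  app b := ↾fun h => Quot.mk _ ⟨.inr ⟨t, h⟩, hj⟩

lemma bijective_sumElim_cellIncl (hpos : IsCellOrdering pos) (t : Q.Elements) (hj : ¬IsMax (pos (.inl t)))
    (b : Aᵒᵖ) : Function.Bijective (Sum.elim ((cellIncl t (Order.lt_succ_of_not_isMax hj)).app b)
      ((stageMap (pos := pos) (Order.le_succ (pos (.inl t)))).app b)) := by
  -- no identification is made before all cells are attached
  have hinj := mk_injective_of_forall_not_lt (not_inr_lt_succ_inl hpos t) b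
  refine ⟨Function.Injective.sumElim ?_ ?_ ?_, ?_⟩
  · intro h h' e
    exact eq_of_heq (Sigma.mk.inj (Sum.inr_injective (congrArg Subtype.val (hinj e)))).2
  · rintro ⟨m⟩ ⟨m'⟩ e
    exact congrArg (Quot.mk _) (Subtype.ext (congrArg Subtype.val (hinj e) :))
  · rintro h ⟨m, hm⟩ e
    obtain rfl : Sum.inr ⟨t, h⟩ = m := congrArg Subtype.val (hinj e)
    exact lt_irrefl _ hm
  · rintro ⟨⟨p | c, hm⟩⟩
    · exact ⟨.inr (Quot.mk _ ⟨.inl p, trivial⟩), rfl⟩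
    · rcases (Order.le_of_lt_succ hm).lt_or_eq with hlt | heq
      · exact ⟨.inr (Quot.mk _ ⟨.inr c, hlt⟩), rfl⟩
      · obtain ⟨x, f⟩ := c
        obtain rfl : x = t := Sum.inl_injective (hpos.injective heq)
        exact ⟨.inl f, rfl⟩

def relIncl (hpos : IsCellOrdering pos) (r : Identification g) {j : J} (hj : pos (.inr r) ≤ j)
    (m : (free P Q).obj r.obj) : yoneda.obj (unop r.obj) ⟶ stage pos j :=
  yonedaEquiv.symm (Quot.mk _ ⟨m, isBorn_of_inr_le hpos hj m⟩)

lemma isPushout_rel (hpos : IsCellOrdering pos) (r : Identification g)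
    (hj : ¬IsMax (pos (.inr r))) :
    IsPushout (fold (yoneda.obj (unop r.obj)))
      (FunctorToTypes.coprod.desc (relIncl hpos r le_rfl r.fst) (relIncl hpos r le_rfl r.snd))
      (relIncl hpos r le_rfl r.fst ≫ stageMap (Order.le_succ _)) (stageMap (Order.le_succ _)) := by
  refine isPushout_fold _ _ _ ?_ (fun b => ?_) (fun b => ?_)
  · ext b h
    exact Quot.sound ⟨r, h.op, Order.lt_succ_of_not_isMax hj, rfl, rfl⟩
  · rintro ⟨m⟩
    exact ⟨Quot.mk _ ⟨m.1, isBorn_of_inr_le hpos le_rfl m.1⟩, rfl⟩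
  · rintro ⟨m⟩ ⟨m'⟩ e
    refine congrArg (Quot.lift (fun (m : Born pos (Order.succ (pos (.inr r))) b) =>
      Quot.mk _ (Quot.mk (StageRel pos _ b) ⟨m.1, isBorn_of_inr_le hpos le_rfl m.1⟩)) ?_) e
    rintro _ _ ⟨r', h, hr', h₁, h₂⟩
    -- the only identification made at stage `succ j` but not at `j` is `r`
    rcases (Order.le_of_lt_succ hr').lt_or_eq with hlt | heq
    · exact congrArg (Quot.mk _) (Quot.sound ⟨r', h, hlt, h₁, h₂⟩)
    · obtain rfl : r' = r := Sum.inr_injective (hpos.injective heq)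
      exact Quot.sound ⟨h.unop, congrArg (Quot.mk _) (Subtype.ext h₁.symm),
        congrArg (Quot.mk _) (Subtype.ext h₂.symm)⟩

lemma pushouts_chain_map_succ (hpos : IsCellOrdering pos) (j : J) (hj : ¬IsMax j) :
    pushouts (generatingMorphisms A) ((chain pos).map (homOfLE (Order.le_succ j))) := by
  obtain ⟨t | r, rfl⟩ := hpos.exists_eq j hj
  · exact ⟨_, _, _, _, _, ⟨.inl (unop t.1), rfl⟩,
      isPushout_initial_of_bijective _ _ (bijective_sumElim_cellIncl hpos t hj)⟩
  · exact ⟨_, _, _, _, _, ⟨.inr (unop r.obj), rfl⟩, isPushout_rel hpos r hj⟩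

lemma identifiedBefore_of_mk_eq (hpos : IsCellOrdering pos) {j : J} (hj : Order.IsSuccLimit j)
    {b : Aᵒᵖ} {m m' : Born pos j b} (e : Quot.mk (StageRel pos j b) m = Quot.mk _ m') :
    IdentifiedBefore pos j b m m' := by
  refine ((equivalence_identifiedBefore hj b).eqvGen_iff).1
    (Relation.EqvGen.eqvGen_mono ?_ _ _ (Quot.eqvGen_exact e))
  rintro _ _ ⟨r, h, hr, h₁, h₂⟩
  have hsucc := Order.lt_succ_of_not_isMax hr.not_isMax
  exact ⟨_, hj.succ_lt hr, isBorn_of_inr_le hpos hsucc.le _, isBorn_of_inr_le hpos hsucc.le _,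
    Quot.sound ⟨r, h, hsucc, h₁, h₂⟩⟩

noncomputable def isColimitRestrictionCocone (hpos : IsCellOrdering pos) {j : J}
    (hj : Order.IsSuccLimit j) : IsColimit (restrictionCocone (chain pos) j) := by
  refine evaluationJointlyReflectsColimits _ fun b => Types.FilteredColimit.isColimitOf _ _ ?_ ?_
  · rintro ⟨m⟩
    obtain ⟨k, hk, hm⟩ := exists_isBorn_lt hj m.2
    exact ⟨⟨k, hk⟩, Quot.mk _ ⟨m.1, hm⟩, rfl⟩
  · rintro i i' ⟨m⟩ ⟨m'⟩ e
    obtain ⟨k, hk, _, _, e⟩ := identifiedBefore_of_mk_eq hpos hj e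
    refine ⟨⟨max (max i i') k, max_lt (max_lt i.2 i'.2) hk⟩,
      homOfLE (le_max_of_le_left (le_max_left _ _)),
      homOfLE (le_max_of_le_left (le_max_right _ _)), ?_⟩
    exact congrArg ((stageMap (le_max_right (max i.1 i'.1) k)).app b) e

lemma isSmooth_chain (hpos : IsCellOrdering pos) : IsSmooth (chain pos) :=
  fun _ hj => ⟨isColimitRestrictionCocone hpos hj⟩

lemma isCellular_stageEval_bot [OrderBot J] [WellFoundedLT J] (hpos : IsCellOrdering pos) :
    IsCellular (generatingMorphisms A) (stageEval pos ⊥) :=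
  ⟨J, inferInstance, inferInstance, inferInstance, inferInstance, chain pos, cocone pos,
    isColimitCocone hpos, rfl, rfl, isSmooth_chain hpos, pushouts_chain_map_succ hpos, rfl⟩

end Succ

lemma exists_isCellular_isRetractArrow (g : P ⟶ Q) :
    ∃ (P' Q' : Aᵒᵖ ⥤ Type u) (g' : P' ⟶ Q'),
      IsCellular (generatingMorphisms A) g' ∧ IsRetractArrow g g' := by
  obtain ⟨J, _, _, _, _, _, pos, hpos⟩ := exists_isCellOrdering Q.Elements (Identification g)
  have := isIso_of_bijective_app _ (bijective_toStageBot (pos := pos))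
  exact ⟨_, _, _, isCellular_stageEval_bot hpos,
    isRetractArrow_of_iso_left (asIso (toStageBot pos)) (toStageBot_comp_stageEval (pos := pos))⟩

end CellularModel

theorem stmt15 (A : Type u) [SmallCategory A] :
    ∃ (ι : Type u) (φ : ι → Arrow (Aᵒᵖ ⥤ Type u)),
      (∀ {P Q : Aᵒᵖ ⥤ Type u} (g : P ⟶ Q),
        ∃ (P' Q' : Aᵒᵖ ⥤ Type u) (g' : P' ⟶ Q'),
          IsCellular (fun _ _ x => ∃ i, Arrow.mk x = φ i) g' ∧ IsRetractArrow g g') ∧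
      cofibrantClosure (fun _ _ x => ∃ i, Arrow.mk x = φ i) =
        (⊤ : MorphismProperty (Aᵒᵖ ⥤ Type u)) ∧
      IsWFS (⊤ : MorphismProperty (Aᵒᵖ ⥤ Type u))
        (MorphismProperty.isomorphisms (Aᵒᵖ ⥤ Type u)) :=
  ⟨A ⊕ A, generators A, CellularModel.exists_isCellular_isRetractArrow,
    cofibrantClosure_eq_top_of_forall_isRetractArrow
      CellularModel.exists_isCellular_isRetractArrow,
    isWFS_top_isomorphisms⟩

end Paper
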